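/- Let g be a finite-dimensional real Lie algebra, and let h := g × g* be the semidirect-product Lie algebra with bracket [(a, α), (b, β)] := ([a, b], ad*_b α − ad*_a β). Suppose η : h* → h is a bijective linear map whose inverse ω := η⁻¹ : h → h* is a symplectic 2-cocycle on h. Define on h* the bracket [[X, Y]]_η := ad*_{η Y} X − ad*_{η X} Y (with ad* the coadjoint action of h on h*). Then the anchor ρ := pr₁ ∘ η : h* → g satisfies ρ([[X, Y]]_η) = [ρ(X), ρ(Y)] for all X, Y ∈ h*, i.e. ρ is a Lie algebra homomorphism from (h*, [[·,·]]_η) to g. -/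
import Mathlib


/-- The coadjoint action of `x : g` on `γ ∈ g*`: `(ad*_x γ)(z) = γ ⁅x, z⁆`. -/
noncomputable def coad {g : Type*} [LieRing g] [LieAlgebra ℝ g]
    (x : g) (γ : Module.Dual ℝ g) : Module.Dual ℝ g :=
  γ ∘ₗ (LieAlgebra.ad ℝ g x)

/-- The semidirect-product bracket on `h := g × g*`:
`[(a, α), (b, β)] = ([a, b], ad*_b α − ad*_a β)`. -/
noncomputable def sdBracket {g : Type*} [LieRing g] [LieAlgebra ℝ g]
    (X Y : g × Module.Dual ℝ g) : g × Module.Dual ℝ g :=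
  (⁅X.1, Y.1⁆, coad Y.1 X.2 - coad X.1 Y.2)

/-- The adjoint action `Z ↦ [X, Z]` of the semidirect-product Lie algebra
`h = g × g*`, as a linear map. -/
noncomputable def adH {g : Type*} [LieRing g] [LieAlgebra ℝ g]
    (X : g × Module.Dual ℝ g) : (g × Module.Dual ℝ g) →ₗ[ℝ] (g × Module.Dual ℝ g) where
  toFun Z := sdBracket X Z
  map_add' Y Z := by
    refine Prod.ext ?_ ?_
    · simp [sdBracket]
    · apply LinearMap.ext; intro w
      simp [sdBracket, coad, LieAlgebra.ad_apply]
      abel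
  map_smul' c Z := by
    refine Prod.ext ?_ ?_
    · simp [sdBracket]
    · apply LinearMap.ext; intro w
      simp [sdBracket, coad, LieAlgebra.ad_apply]
      ring

/-- The coadjoint action of the semidirect-product Lie algebra `h = g × g*` on its
dual `h*`: `(ad*_X γ)(Z) = γ([X, Z])`. -/
noncomputable def coadH {g : Type*} [LieRing g] [LieAlgebra ℝ g]
    (X : g × Module.Dual ℝ g) (γ : Module.Dual ℝ (g × Module.Dual ℝ g)) :
    Module.Dual ℝ (g × Module.Dual ℝ g) :=
  γ ∘ₗ adH X

/-- Let `h := g × g*` be the semidirect-product Lie algebra of a finite-dimensional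
real Lie algebra `g`, and let `η : h* → h` be a bijective linear map whose inverse
`ω := η⁻¹ : h → h*` is a symplectic 2-cocycle on `h`. Then the anchor
`ρ := pr₁ ∘ η : h* → g` intertwines the bracket `[[X, Y]]_η := ad*_{η Y} X − ad*_{η X} Y`
on `h*` with the Lie bracket of `g`: `ρ([[X, Y]]_η) = [ρ(X), ρ(Y)]`. -/
theorem anchor_lieHom_sd (g : Type*) [LieRing g] [LieAlgebra ℝ g]
    [FiniteDimensional ℝ g]
    (η : Module.Dual ℝ (g × Module.Dual ℝ g) ≃ₗ[ℝ] (g × Module.Dual ℝ g))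
    (hskew : ∀ x y : g × Module.Dual ℝ g, η.symm x y = - η.symm y x)
    (hcocycle : ∀ x y z : g × Module.Dual ℝ g,
      η.symm (sdBracket x y) z + η.symm (sdBracket y z) x
        + η.symm (sdBracket z x) y = 0) :
    ∀ X Y : Module.Dual ℝ (g × Module.Dual ℝ g),
      (η (coadH (η Y) X - coadH (η X) Y)).1 = ⁅(η X).1, (η Y).1⁆ := by
  intro X Y
  have hanti : ∀ x z : g × Module.Dual ℝ g, sdBracket z x = - sdBracket x z := by
    intro x z
    refine Prod.ext ?_ ?_
    · show (sdBracket z x).1 = (-(sdBracket x z)).1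
      rw [Prod.fst_neg]
      show ⁅z.1, x.1⁆ = -⁅x.1, z.1⁆
      exact (lie_skew z.1 x.1).symm
    · show (sdBracket z x).2 = (-(sdBracket x z)).2
      rw [Prod.snd_neg]
      show coad x.1 z.2 - coad z.1 x.2 = -(coad z.1 x.2 - coad x.1 z.2)
      abel
  have key : coadH (η Y) X - coadH (η X) Y = η.symm (sdBracket (η X) (η Y)) := by
    apply LinearMap.ext; intro Z
    have hc := hcocycle (η X) (η Y) Z
    have h1 : η.symm (sdBracket (η Y) Z) (η X) = - X (sdBracket (η Y) Z) := by
      rw [hskew]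
      have : η.symm (η X) = X := η.symm_apply_apply X
      rw [this]
    have h2 : η.symm (sdBracket Z (η X)) (η Y) = Y (sdBracket (η X) Z) := by
      rw [hskew, hanti (η X) Z, map_neg]
      have : η.symm (η Y) = Y := η.symm_apply_apply Y
      simp [this]
    have hz : (coadH (η Y) X - coadH (η X) Y) Z
        = X (sdBracket (η Y) Z) - Y (sdBracket (η X) Z) := by
      simp [coadH, adH]
    rw [hz]
    rw [h1, h2] at hc
    linarith
  rw [key, η.apply_symm_apply]
  rfl
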